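/- arXiv:1611.01648 — 2 statements merged into one kernel-verified Lean document; each statement's English description precedes it below -/
import Mathlib

section
/- For any institution I and any signature morphism h : Σ₁ → Σ₂, the closure operators C^I_Σ(Γ) := Γ** satisfy the coherence condition of a π-institution: Sen(h)[C^I_{Σ₁}(Γ)] ⊆ C^I_{Σ₂}(Sen(h)[Γ]) for all Γ ⊆ Sen(Σ₁). Hence F(I) := (Sig, Sen, {C^I_Σ}) is a π-institution. -/
open CategoryTheory Opposite

universe u v

/-- An institution: a category of signatures, sentence functor, model functor
(we record the discrete collection of models of each signature), and a
satisfaction relation compatible with signature morphisms. -/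
structure Institution where
  Sig : Type u
  [instCat : Category.{v} Sig]
  Sen : Sig ⥤ Type u
  Mod : Sigᵒᵖ ⥤ Type u
  Sat : ∀ X : Sig, Mod.obj (op X) → Sen.obj X → Prop
  compat : ∀ {X Y : Sig} (h : X ⟶ Y) (M : Mod.obj (op Y)) (φ : Sen.obj X),
    Sat Y M (Sen.map h φ) ↔ Sat X (Mod.map h.op M) φ

attribute [instance] Institution.instCat

namespace Institution

variable (I : Institution)

/-- `Γ*` : the models satisfying all sentences of `Γ`. -/
def modsOf (X : I.Sig) (Γ : Set (I.Sen.obj X)) : Set (I.Mod.obj (op X)) :=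
  {m | ∀ φ ∈ Γ, I.Sat X m φ}

/-- `M*` : the sentences satisfied by all models of `M`. -/
def thOf (X : I.Sig) (M : Set (I.Mod.obj (op X))) : Set (I.Sen.obj X) :=
  {φ | ∀ m ∈ M, I.Sat X m φ}

/-- The induced closure operator `C^I_Σ(Γ) = Γ**`. -/
def C (X : I.Sig) (Γ : Set (I.Sen.obj X)) : Set (I.Sen.obj X) :=
  I.thOf X (I.modsOf X Γ)

end Institution

/-! `Γ ↦ Γ*` and `M ↦ M*` form an antitone Galois connection between sets of sentences and sets
of models, so `Γ ↦ Γ**` is a closure operator. Coherence holds because, by the satisfaction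
condition, the models of `Sen(h)[Γ]` are exactly the models whose `Mod(h)`-reduct is a model of
`Γ`, and every `Sen(h)`-translate of a consequence of `Γ` holds in all of them. -/

namespace Institution

variable (I : Institution)

theorem gc_modsOf_thOf (X : I.Sig) :
    GaloisConnection (OrderDual.toDual ∘ I.modsOf X) (I.thOf X ∘ OrderDual.ofDual) :=
  fun _ _ => ⟨fun hM _ hφ _ hm => hM hm _ hφ, fun hΓ _ hm _ hφ => hΓ hφ _ hm⟩

def closureOperator (X : I.Sig) : ClosureOperator (Set (I.Sen.obj X)) :=
  (I.gc_modsOf_thOf X).closureOperator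

theorem modsOf_image_map {X Y : I.Sig} (h : X ⟶ Y) (Γ : Set (I.Sen.obj X)) :
    I.modsOf Y (I.Sen.map h '' Γ) = I.Mod.map h.op ⁻¹' I.modsOf X Γ := by
  ext m
  simp only [modsOf, Set.mem_ofPred_eq, Set.mem_preimage, Set.forall_mem_image, I.compat]

theorem image_map_thOf_subset {X Y : I.Sig} (h : X ⟶ Y) (M : Set (I.Mod.obj (op X))) :
    I.Sen.map h '' I.thOf X M ⊆ I.thOf Y (I.Mod.map h.op ⁻¹' M) := by
  rintro _ ⟨φ, hφ, rfl⟩ m hm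
  exact (I.compat h m φ).2 (hφ _ hm)

theorem image_map_C_subset {X Y : I.Sig} (h : X ⟶ Y) (Γ : Set (I.Sen.obj X)) :
    I.Sen.map h '' I.C X Γ ⊆ I.C Y (I.Sen.map h '' Γ) := by
  rw [C, C, modsOf_image_map]
  exact I.image_map_thOf_subset h _

end Institution

/-- the closure operators `C^I_Σ(Γ) = Γ**` are extensive, monotone
and idempotent, and satisfy the coherence condition of a π-institution:
`Sen(h)[C^I_{Σ₁}(Γ)] ⊆ C^I_{Σ₂}(Sen(h)[Γ])`. Hence `F(I)` is a π-institution. -/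
theorem F_obj_is_pi_institution (I : Institution) :
    (∀ (X : I.Sig) (Γ : Set (I.Sen.obj X)), Γ ⊆ I.C X Γ) ∧
    (∀ (X : I.Sig) (Γ Δ : Set (I.Sen.obj X)), Γ ⊆ Δ → I.C X Γ ⊆ I.C X Δ) ∧
    (∀ (X : I.Sig) (Γ : Set (I.Sen.obj X)), I.C X (I.C X Γ) = I.C X Γ) ∧
    (∀ {X Y : I.Sig} (h : X ⟶ Y) (Γ : Set (I.Sen.obj X)),
      I.Sen.map h '' I.C X Γ ⊆ I.C Y (I.Sen.map h '' Γ)) :=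
  ⟨fun X => (I.closureOperator X).le_closure,
    fun X _ _ hΓΔ => (I.closureOperator X).monotone hΓΔ,
    fun X => (I.closureOperator X).idempotent,
    I.image_map_C_subset⟩
end

section
/- Let f = (φ, α, β) : I → I' be a comorphism of institutions. Then the pair (φ, α) satisfies the compatibility condition of π-institution comorphisms with respect to the induced closure operators: for all Σ and all Γ ∪ {ψ} ⊆ Sen(Σ), if ψ ∈ Γ** (computed in I) then α_Σ(ψ) ∈ (α_Σ[Γ])** (computed in I'). Hence F(f) := (φ, α) is a comorphism of π-institutions F(I) → F(I'). -/
open CategoryTheory Opposite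

universe u v

/-- A comorphism of institutions. -/
structure Comorphism (I I' : Institution) where
  φ : I.Sig ⥤ I'.Sig
  α : I.Sen ⟶ φ ⋙ I'.Sen
  β : φ.op ⋙ I'.Mod ⟶ I.Mod
  compat : ∀ (X : I.Sig) (m' : I'.Mod.obj (op (φ.obj X))) (ψ : I.Sen.obj X),
    I'.Sat (φ.obj X) m' (α.app X ψ) ↔ I.Sat X (β.app (op X) m') ψ

/-! The satisfaction condition says that `Γ ↦ α_Σ[Γ]` and `M' ↦ β_Σ[M']` are compatible with the
two satisfaction Galois connections: the models of `α_Σ[Γ]` are the `β_Σ`-preimage of `Γ*`, and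
`α_Σ(ψ)` holds throughout `M'` iff `ψ` holds throughout `β_Σ[M']`. Since `β_Σ[β_Σ⁻¹(Γ*)] ⊆ Γ*`,
every `ψ ∈ Γ**` is mapped into `(α_Σ[Γ])**`. -/

theorem Institution.thOf_anti (I : Institution) {X : I.Sig} {M N : Set (I.Mod.obj (op X))}
    (h : M ⊆ N) : I.thOf X N ⊆ I.thOf X M :=
  fun _ hφ m hm => hφ m (h hm)

namespace Comorphism

variable {I I' : Institution} (f : Comorphism I I') (X : I.Sig)

theorem modsOf_image_α_app (Γ : Set (I.Sen.obj X)) :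
    I'.modsOf (f.φ.obj X) (f.α.app X '' Γ) = f.β.app (op X) ⁻¹' I.modsOf X Γ := by
  ext m'
  simp only [Institution.modsOf, Set.mem_ofPred_eq, Set.mem_preimage, Set.forall_mem_image,
    f.compat]

theorem α_app_mem_thOf_iff (M' : Set (I'.Mod.obj (op (f.φ.obj X)))) (ψ : I.Sen.obj X) :
    f.α.app X ψ ∈ I'.thOf (f.φ.obj X) M' ↔ ψ ∈ I.thOf X (f.β.app (op X) '' M') := by
  simp only [Institution.thOf, Set.mem_ofPred_eq, Set.forall_mem_image, f.compat]

end Comorphism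

/-- for a comorphism of institutions `(φ, α, β)`, the pair `(φ, α)`
satisfies the compatibility condition of π-institution comorphisms for the
induced closure operators: `ψ ∈ Γ**` implies `α_Σ(ψ) ∈ (α_Σ[Γ])**`. -/
theorem F_map_is_pi_comorphism {I I' : Institution} (f : Comorphism I I')
    (X : I.Sig) (Γ : Set (I.Sen.obj X)) (ψ : I.Sen.obj X) (hψ : ψ ∈ I.C X Γ) :
    f.α.app X ψ ∈ I'.C (f.φ.obj X) (f.α.app X '' Γ) := by
  rw [Institution.C, f.α_app_mem_thOf_iff, f.modsOf_image_α_app]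
  exact I.thOf_anti (Set.image_preimage_subset _ _) hψ
end
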